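/- Let R ≥ 1, let w_1, …, w_R be positive reals with W = Σ_{r=1}^R w_r, let C > 0, η > 0, let x ∈ ℝ, and let x̂_1, …, x̂_R ∈ ℝ satisfy (x̂_r − x)² ≤ C for all r. Then the weighted-average prediction x̂_0 = (Σ_{r=1}^R w_r·x̂_r)/W satisfies (x̂_0 − x)² ≤ −(1/η)·log( (Σ_{r=1}^R w_r·e^{−η·(x̂_r − x)²}) / W ) + η·C²/8. -/

import Mathlib

open Real

lemma hoeffding_scalar (q : ℝ) (hq0 : 0 ≤ q) (hq1 : q ≤ 1) (u : ℝ) :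
    Real.log ((1 - q) + q * Real.exp u) ≤ q * u + u ^ 2 / 8 := by
  set D : ℝ → ℝ := fun v => (1 - q) + q * Real.exp v with hDdef
  have hD : ∀ v, 0 < D v := by
    intro v
    rcases eq_or_lt_of_le hq0 with h | h
    · simp [hDdef, ← h]
    · have := mul_pos h (Real.exp_pos v)
      simp only [hDdef]; nlinarith
  set t : ℝ → ℝ := fun v => q * Real.exp v / D v with htdef
  set h : ℝ → ℝ := fun v => Real.log (D v) - q * v - v ^ 2 / 8 with hhdef
  set g : ℝ → ℝ := fun v => t v - q - v / 4 with hgdef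
  have hDd : ∀ v, HasDerivAt D (q * Real.exp v) v := fun v =>
    ((Real.hasDerivAt_exp v).const_mul q).const_add (1 - q)
  have hhd : ∀ v, HasDerivAt h (g v) v := by
    intro v
    have h1 : HasDerivAt (fun v => Real.log (D v)) (q * Real.exp v / D v) v :=
      (hDd v).log (hD v).ne'
    have h2 : HasDerivAt (fun v : ℝ => q * v) q v := by
      simpa using (hasDerivAt_id v).const_mul q
    have h3 : HasDerivAt (fun v : ℝ => v ^ 2 / 8) (v / 4) v := by
      have := (hasDerivAt_pow 2 v).div_const 8
      exact this.congr_deriv (by norm_num; ring)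
    exact (h1.sub h2).sub h3
  have hgd : ∀ v, HasDerivAt g (t v * (1 - t v) - 1 / 4) v := by
    intro v
    have h1 : HasDerivAt t (t v * (1 - t v)) v := by
      have h0 := (((Real.hasDerivAt_exp v).const_mul q).div (hDd v) (hD v).ne')
      refine h0.congr_deriv ?_
      have hne := (hD v).ne'
      show _ = q * Real.exp v / D v * (1 - q * Real.exp v / D v)
      field_simp [htdef]
    have h2 : HasDerivAt (fun v : ℝ => v / 4) (1 / 4 : ℝ) v := by
      simpa using (hasDerivAt_id v).div_const 4
    exact (h1.sub_const q).sub h2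
  have hg0 : g 0 = 0 := by
    simp [hgdef, htdef, hDdef]
  have hganti : Antitone g := by
    apply antitone_of_deriv_nonpos (fun v => (hgd v).differentiableAt)
    intro v
    rw [(hgd v).deriv]
    nlinarith [sq_nonneg (t v - 1 / 2)]
  have hh0 : h 0 = 0 := by simp [hhdef, hDdef]
  have key : h u ≤ 0 := by
    rcases le_total 0 u with hu | hu
    · have hanti : AntitoneOn h (Set.Icc 0 u) := by
        apply antitoneOn_of_deriv_nonpos (convex_Icc 0 u)
        · exact fun y _ => ((hhd y).differentiableAt).continuousAt.continuousWithinAt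
        · exact fun y _ => ((hhd y).differentiableAt).differentiableWithinAt
        · intro y hy
          rw [(hhd y).deriv]
          have : g y ≤ g 0 := hganti (interior_subset hy).1
          linarith [hg0]
      have := hanti (Set.left_mem_Icc.2 hu) (Set.right_mem_Icc.2 hu) hu
      linarith [hh0]
    · have hmono : MonotoneOn h (Set.Icc u 0) := by
        apply monotoneOn_of_deriv_nonneg (convex_Icc u 0)
        · exact fun y _ => ((hhd y).differentiableAt).continuousAt.continuousWithinAt
        · exact fun y _ => ((hhd y).differentiableAt).differentiableWithinAt
        · intro y hy
          rw [(hhd y).deriv]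
          have : g 0 ≤ g y := hganti (interior_subset hy).2
          linarith [hg0]
      have := hmono (Set.left_mem_Icc.2 hu) (Set.right_mem_Icc.2 hu) hu
      linarith [hh0]
  have : Real.log (D u) - q * u - u ^ 2 / 8 ≤ 0 := key
  simpa [hDdef] using by linarith

/-- per-round inequality (eq:102) in the proof of Theorem 2: the
squared loss of the weighted-average prediction is bounded via Hoeffding's lemma
and Jensen's inequality by
`−(1/η)·log((Σ w_r e^{−η (x̂_r − x)²})/W) + η C²/8`, when `(x̂_r − x)² ≤ C`. -/
theorem stmt_4 (R : ℕ) (hR : 1 ≤ R) (w : Fin R → ℝ) (hw : ∀ r, 0 < w r)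
    (C η : ℝ) (hC : 0 < C) (hη : 0 < η) (x : ℝ) (xh : Fin R → ℝ)
    (hxh : ∀ r, (xh r - x) ^ 2 ≤ C) :
    ((∑ r, w r * xh r) / (∑ r, w r) - x) ^ 2
      ≤ -(1 / η) * Real.log ((∑ r, w r * Real.exp (-η * (xh r - x) ^ 2)) / ∑ r, w r)
        + η * C ^ 2 / 8 := by
  haveI : NeZero R := ⟨by omega⟩
  have hne : (Finset.univ : Finset (Fin R)).Nonempty := Finset.univ_nonempty
  set W : ℝ := ∑ r, w r with hWdef
  have hW : 0 < W := Finset.sum_pos (fun r _ => hw r) hne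
  set p : Fin R → ℝ := fun r => w r / W with hpdef
  have hp0 : ∀ r, 0 ≤ p r := fun r => div_nonneg (hw r).le hW.le
  have hpsum : ∑ r, p r = 1 := by
    rw [hpdef]
    simp only []
    rw [← Finset.sum_div, div_self hW.ne']
  set f : Fin R → ℝ := fun r => (xh r - x) ^ 2 with hfdef
  have hf0 : ∀ r, 0 ≤ f r := fun r => sq_nonneg _
  set μ : ℝ := ∑ r, p r * f r with hμdef
  have hμ0 : 0 ≤ μ := Finset.sum_nonneg fun r _ => mul_nonneg (hp0 r) (hf0 r)
  have hμC : μ ≤ C := by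
    calc μ ≤ ∑ r, p r * C :=
          Finset.sum_le_sum fun r _ => mul_le_mul_of_nonneg_left (hxh r) (hp0 r)
      _ = C := by rw [← Finset.sum_mul, hpsum, one_mul]
  -- Jensen via Cauchy-Schwarz
  have e1 : (∑ r, w r * xh r) / W - x = ∑ r, p r * (xh r - x) := by
    have : ∑ r, p r * (xh r - x) = (∑ r, w r * (xh r - x)) / W := by
      rw [Finset.sum_div]
      exact Finset.sum_congr rfl fun r _ => by rw [hpdef]; ring
    have h2 : ∑ r, w r * (xh r - x) = (∑ r, w r * xh r) - W * x := by
      simp only [mul_sub, Finset.sum_sub_distrib, ← Finset.sum_mul, ← hWdef]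
    rw [this, h2, sub_div, mul_div_cancel_left₀ x hW.ne']
  have jensen : ((∑ r, w r * xh r) / W - x) ^ 2 ≤ μ := by
    rw [e1]
    have hcs := Finset.sum_mul_sq_le_sq_mul_sq Finset.univ
      (fun r => Real.sqrt (p r)) (fun r => Real.sqrt (p r) * (xh r - x))
    have e2 : ∀ r : Fin R, Real.sqrt (p r) * (Real.sqrt (p r) * (xh r - x)) = p r * (xh r - x) := by
      intro r
      rw [← mul_assoc, Real.mul_self_sqrt (hp0 r)]
    have e3 : ∀ r : Fin R, Real.sqrt (p r) ^ 2 = p r := fun r => Real.sq_sqrt (hp0 r)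
    have e4 : ∀ r : Fin R, (Real.sqrt (p r) * (xh r - x)) ^ 2 = p r * f r := by
      intro r
      rw [mul_pow, e3 r, hfdef]
    simp only [e2, e3, e4] at hcs
    calc (∑ r, p r * (xh r - x)) ^ 2 ≤ (∑ r, p r) * ∑ r, p r * f r := hcs
      _ = μ := by rw [hpsum, one_mul]
  -- chord bound from convexity of exp
  set S : ℝ := ∑ r, p r * Real.exp (-η * f r) with hSdef
  have hS : 0 < S :=
    Finset.sum_pos (fun r _ => mul_pos (div_pos (hw r) hW) (Real.exp_pos _)) hne
  have chord : ∀ r : Fin R, Real.exp (-η * f r)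
      ≤ (1 - f r / C) + (f r / C) * Real.exp (-η * C) := by
    intro r
    have ha : (0:ℝ) ≤ 1 - f r / C := by
      rw [sub_nonneg, div_le_one hC]; exact hxh r
    have hb : (0:ℝ) ≤ f r / C := div_nonneg (hf0 r) hC.le
    have hab : (1 - f r / C) + f r / C = 1 := by ring
    have := convexOn_exp.2 (Set.mem_univ (0:ℝ)) (Set.mem_univ (-η * C)) ha hb hab
    simp only [smul_eq_mul, mul_zero, zero_add, Real.exp_zero, mul_one] at this
    have e5 : f r / C * (-η * C) = -η * f r := by field_simp
    rw [e5] at this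
    linarith
  have hSle : S ≤ (1 - μ / C) + (μ / C) * Real.exp (-η * C) := by
    calc S ≤ ∑ r, p r * ((1 - f r / C) + (f r / C) * Real.exp (-η * C)) :=
          Finset.sum_le_sum fun r _ => mul_le_mul_of_nonneg_left (chord r) (hp0 r)
      _ = (1 - μ / C) + (μ / C) * Real.exp (-η * C) := by
          simp only [mul_add, mul_sub, Finset.sum_add_distrib, Finset.sum_sub_distrib,
            mul_one]
          rw [hpsum]
          have ea : ∑ r, p r * (f r / C) = μ / C := by
            rw [hμdef, Finset.sum_div]
            exact Finset.sum_congr rfl fun r _ => by ring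
          have eb : ∑ r, p r * (f r / C * Real.exp (-η * C))
              = μ / C * Real.exp (-η * C) := by
            rw [show (fun r : Fin R => p r * (f r / C * Real.exp (-η * C)))
                = fun r : Fin R => p r * (f r / C) * Real.exp (-η * C) from
              funext fun r => by ring, ← Finset.sum_mul, ea]
          rw [ea, eb]
  -- Hoeffding
  have hq0 : 0 ≤ μ / C := div_nonneg hμ0 hC.le
  have hq1 : μ / C ≤ 1 := (div_le_one hC).2 hμC
  have hhoef := hoeffding_scalar (μ / C) hq0 hq1 (-η * C)
  have e6 : μ / C * (-η * C) = -η * μ := by field_simp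
  have e7 : (-η * C) ^ 2 / 8 = η ^ 2 * C ^ 2 / 8 := by ring
  rw [e6, e7] at hhoef
  have hlogS : Real.log S ≤ -η * μ + η ^ 2 * C ^ 2 / 8 :=
    (Real.log_le_log hS hSle).trans hhoef
  have hfinal : μ ≤ -(1 / η) * Real.log S + η * C ^ 2 / 8 := by
    have := mul_le_mul_of_nonneg_left hlogS (le_of_lt (one_div_pos.2 hη))
    have e8 : 1 / η * (-η * μ + η ^ 2 * C ^ 2 / 8) = -μ + η * C ^ 2 / 8 := by
      field_simp
    rw [e8] at this
    linarith
  have eS : S = (∑ r, w r * Real.exp (-η * (xh r - x) ^ 2)) / W := by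
    rw [hSdef, Finset.sum_div]
    exact Finset.sum_congr rfl fun r _ => by rw [hpdef, hfdef]; ring
  rw [← eS]
  exact jensen.trans hfinal
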